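/- arXiv:2505.04849 — 3 statements merged into one kernel-verified Lean document; each statement's English description precedes it below -/
import Mathlib

section
/- Let R be a commutative ring with identity and let P be a non-maximal prime ideal of R. Then either P equals the intersection of all prime ideals of R that properly contain P, or there exists a sequence (I_n) of ideals, each properly containing P, such that P = ⋂ I_n. -/
/-!
Let `x` lie in every prime strictly above `P` but not in `P`. If some `y ∉ P` lay in every
`(x ^ n) + P`, then every prime containing `(y) + P` strictly contains `P`, so `x ^ n ∈ (y) + P`
for some `n`; combined with `y ∈ (x ^ (n + 1)) + P` this gives `x ^ n (1 - a x) ∈ P`, so `x` is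
invertible modulo `P`. That is impossible, since `x` lies in a maximal ideal strictly above `P`.
-/

namespace Ideal

variable {R : Type*} [CommRing R] {P : Ideal R}

theorem le_sInf_isPrime_gt (P : Ideal R) : P ≤ sInf {Q : Ideal R | Q.IsPrime ∧ P < Q} :=
  le_sInf fun _ hQ => hQ.2.le

theorem lt_span_pow_sup [P.IsPrime] {x : R} (hxP : x ∉ P) (n : ℕ) :
    P < span {x ^ n} ⊔ P := by
  rw [sup_comm]
  exact Submodule.lt_sup_iff_notMem.mpr fun h => hxP (IsPrime.mem_of_pow_mem ‹_› n h)

theorem exists_pow_mem_span_sup_of_mem_sInf {x y : R}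
    (hx : x ∈ sInf {Q : Ideal R | Q.IsPrime ∧ P < Q}) (hyP : y ∉ P) :
    ∃ n : ℕ, x ^ n ∈ span {y} ⊔ P := by
  suffices x ∈ (span {y} ⊔ P).radical from this
  rw [radical_eq_sInf]
  refine mem_sInf.mpr fun Q ⟨hyPQ, hQ⟩ => mem_sInf.mp hx ⟨hQ, ?_⟩
  have hyQ : y ∈ Q := hyPQ (mem_sup_left (mem_span_singleton_self y))
  exact lt_of_le_of_ne (le_sup_right.trans hyPQ) fun h => hyP (h ▸ hyQ)

theorem exists_one_sub_mul_mem_of_pow_mem_span_sup [P.IsPrime] {x y : R} {n : ℕ}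
    (hxP : x ∉ P) (hxy : x ^ n ∈ span {y} ⊔ P) (hyx : y ∈ span {x ^ (n + 1)} ⊔ P) :
    ∃ a : R, 1 - a * x ∈ P := by
  obtain ⟨b, p, hp, hxy⟩ := mem_span_singleton_sup.mp hxy
  obtain ⟨c, q, hq, hyx⟩ := mem_span_singleton_sup.mp hyx
  have hprod : x ^ n * (1 - b * c * x) ∈ P := by
    have : x ^ n * (1 - b * c * x) = b * q + p := by
      linear_combination -hxy - b * hyx
    exact this ▸ P.add_mem (P.mul_mem_left b hq) hp
  refine ⟨b * c, (IsPrime.mem_or_mem ‹_› hprod).resolve_left fun h => hxP ?_⟩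
  exact IsPrime.mem_of_pow_mem ‹_› n h

theorem one_sub_mul_notMem_of_mem_sInf [P.IsPrime] (hnm : ¬ P.IsMaximal) {x : R}
    (hx : x ∈ sInf {Q : Ideal R | Q.IsPrime ∧ P < Q}) (a : R) : 1 - a * x ∉ P := by
  intro h
  obtain ⟨M, hM, hPM⟩ := exists_le_maximal P IsPrime.ne_top'
  have hxM : x ∈ M :=
    mem_sInf.mp hx ⟨hM.isPrime, lt_of_le_of_ne hPM fun e => hnm (e ▸ hM)⟩
  refine hM.ne_top ((eq_top_iff_one M).mpr ?_)
  simpa using M.add_mem (hPM h) (M.mul_mem_left a hxM)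

theorem iInf_span_pow_sup_eq_of_mem_sInf [P.IsPrime] (hnm : ¬ P.IsMaximal) {x : R}
    (hx : x ∈ sInf {Q : Ideal R | Q.IsPrime ∧ P < Q}) (hxP : x ∉ P) :
    ⨅ n, span {x ^ n} ⊔ P = P := by
  refine le_antisymm (fun y hy => ?_) (le_iInf fun _ => le_sup_right)
  by_contra hyP
  obtain ⟨n, hxy⟩ := exists_pow_mem_span_sup_of_mem_sInf hx hyP
  obtain ⟨a, ha⟩ :=
    exists_one_sub_mul_mem_of_pow_mem_span_sup hxP hxy (mem_iInf.mp hy (n + 1))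
  exact one_sub_mul_notMem_of_mem_sInf hnm hx a ha

end Ideal

theorem stmt_0 {R : Type*} [CommRing R] (P : Ideal R) (hP : P.IsPrime)
    (hnm : ¬ P.IsMaximal) :
    P = sInf {Q : Ideal R | Q.IsPrime ∧ P < Q} ∨
      ∃ I : ℕ → Ideal R, (∀ n, P < I n) ∧ P = ⨅ n, I n := by
  refine or_iff_not_imp_left.mpr fun hne => ?_
  obtain ⟨x, hx, hxP⟩ := SetLike.exists_of_lt (lt_of_le_of_ne P.le_sInf_isPrime_gt hne)
  exact ⟨fun n => Ideal.span {x ^ n} ⊔ P, Ideal.lt_span_pow_sup hxP,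
    (Ideal.iInf_span_pow_sup_eq_of_mem_sInf hnm hx hxP).symm⟩
end

section
/- Let R be an integral domain (commutative with 1) and let x be a nonzero non-unit such that x belongs to every nonzero prime ideal of R. Then the intersection of the principal ideals (x^n) over all n ≥ 1 is the zero ideal. -/
theorem stmt_2 {R : Type*} [CommRing R] [IsDomain R] (x : R) (hx : x ≠ 0)
    (hxu : ¬ IsUnit x)
    (hmem : ∀ Q : Ideal R, Q.IsPrime → Q ≠ ⊥ → x ∈ Q) :
    (⨅ n : ℕ, Ideal.span {x ^ (n + 1)}) = ⊥ := by
  rw [eq_bot_iff]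
  intro y hy
  rw [Ideal.mem_bot]
  by_contra hy0
  -- every nonzero element divides some power of x
  have key : ∃ n : ℕ, y ∣ x ^ n := by
    by_contra hdvd
    push_neg at hdvd
    have hdisj : Disjoint ((Ideal.span {y} : Ideal R) : Set R)
        (Submonoid.powers x : Set R) := by
      rw [Set.disjoint_left]
      rintro s hs ⟨n, rfl⟩
      exact hdvd n (Ideal.mem_span_singleton.mp hs)
    obtain ⟨p, hp, hle, hpd⟩ := Ideal.exists_le_prime_disjoint _ _ hdisj
    have hpne : p ≠ ⊥ := by
      intro h
      have : y ∈ p := hle (Ideal.mem_span_singleton_self y)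
      rw [h, Ideal.mem_bot] at this
      exact hy0 this
    exact Set.disjoint_left.mp hpd (hmem p hp hpne) ⟨1, pow_one x⟩
  obtain ⟨n, r, hr⟩ := key
  have hyn : y ∈ Ideal.span {x ^ (n + 1)} := Ideal.mem_iInf.mp hy n
  obtain ⟨c, hc⟩ := Ideal.mem_span_singleton.mp hyn
  apply hxu
  have key2 : x ^ n * (x * (c * r)) = x ^ n * 1 := by
    calc x ^ n * (x * (c * r)) = x ^ (n + 1) * c * r := by ring
    _ = y * r := by rw [← hc]
    _ = x ^ n := hr.symm
    _ = x ^ n * 1 := (mul_one _).symm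
  have h1 : x * (c * r) = 1 := mul_left_cancel₀ (pow_ne_zero n hx) key2
  exact IsUnit.of_mul_eq_one (c * r) h1
end

section
/- Let A be a commutative unital Banach algebra and I a closed ideal such that every element of I is nilpotent (I is a nil ideal). Then I is nilpotent: there exists a positive integer N with I^N = {0}. -/
/-! By Baire's theorem, the complete space `I = ⋃ n, {x ∈ I | x ^ n = 0}` has some
`{x ∈ I | x ^ n = 0}` containing a ball of `I` around a point `x₀`. For `y ∈ I`, the polynomial
`t ↦ (x₀ + t • y) ^ n` then vanishes for all small `t : ℂ`, so all its coefficients vanish, and the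
leading one is `y ^ n`: the nil-index on `I` is bounded by `n`.

In characteristic zero, a commutative ideal of bounded nil-index `n` satisfies `I ^ n = ⊥`: if
`a ^ m * c = 0` for all `a ∈ I`, then the coefficient of `t` in `(a + t • d) ^ m * c = 0` gives
`m • a ^ (m - 1) * d * c = 0`, trading one factor `a` for an arbitrary factor `d ∈ I`. -/

open Finset Polynomial

theorem eq_zero_of_forall_sum_pow_smul_eq_zero {K V : Type*} [Field K] [AddCommGroup V]
    [Module K V] {S : Set K} (hS : S.Infinite) {c : ℕ → V} {m : ℕ}
    (h : ∀ t ∈ S, ∑ j ∈ range m, t ^ j • c j = 0) {j : ℕ} (hj : j < m) : c j = 0 := by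
  refine (Module.forall_dual_apply_eq_zero_iff K (c j)).mp fun φ => ?_
  set p : K[X] := ∑ i ∈ range m, monomial i (φ (c i))
  have hp : p = 0 := by
    refine p.eq_zero_of_infinite_isRoot (hS.mono fun t ht => ?_)
    simpa [p, eval_finsetSum, mul_comm] using congrArg φ (h t ht)
  simpa [p, finsetSum_coeff, coeff_monomial, hj] using congrArg (coeff · j) hp

theorem choose_smul_mul_eq_zero_of_forall_add_smul_pow_mul_eq_zero {K A : Type*} [Field K]
    [CommRing A] [Algebra K A] {S : Set K} (hS : S.Infinite) {a b c : A} {m : ℕ}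
    (h : ∀ t ∈ S, (a + t • b) ^ m * c = 0) {j : ℕ} (hj : j ≤ m) :
    (m.choose j : K) • (b ^ j * a ^ (m - j) * c) = 0 := by
  refine eq_zero_of_forall_sum_pow_smul_eq_zero hS
    (c := fun i => (m.choose i : K) • (b ^ i * a ^ (m - i) * c)) (m := m + 1)
    (fun t ht => ?_) (Nat.lt_succ_of_le hj)
  rw [← h t ht, add_comm a, add_pow, sum_mul]
  refine sum_congr rfl fun i _ => ?_
  simp only [Algebra.smul_def, map_pow, map_natCast]
  ring

theorem Ideal.pow_eq_bot_of_forall_pow_eq_zero (K : Type*) {A : Type*} [Field K] [CharZero K]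
    [CommRing A] [Algebra K A] {I : Ideal A} {n : ℕ} (h : ∀ a ∈ I, a ^ n = 0) : I ^ n = ⊥ := by
  suffices key : ∀ k ≤ n, ∀ c ∈ I ^ k, ∀ a ∈ I, a ^ (n - k) * c = 0 by
    refine (Submodule.eq_bot_iff _).mpr fun c hc => ?_
    simpa using key n le_rfl c hc 0 I.zero_mem
  intro k
  induction k with
  | zero => intro _ c _ a ha; rw [Nat.sub_zero, h a ha, zero_mul]
  | succ k ih =>
    intro hk c hc a ha
    rw [pow_succ] at hc
    refine Submodule.mul_induction_on hc (fun c hc d hd => ?_) fun x y hx hy => by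
      rw [mul_add, hx, hy, add_zero]
    have hline : ∀ t ∈ (Set.univ : Set K), (a + t • d) ^ (n - k) * c = 0 := fun t _ =>
      ih (by omega) c hc _ (I.add_mem ha (I.smul_of_tower_mem t hd))
    have := choose_smul_mul_eq_zero_of_forall_add_smul_pow_mul_eq_zero Set.infinite_univ hline
      (j := 1) (by omega)
    rw [Nat.choose_one_right, smul_eq_zero, Nat.cast_eq_zero, pow_one] at this
    rw [show n - (k + 1) = n - k - 1 by omega]
    linear_combination this.resolve_left (by omega)

theorem IsClosed.exists_ball_subset_pow_eq_zero {A : Type*} [NormedRing A] [CompleteSpace A]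
    {s : Set A} (hs : IsClosed s) (hne : s.Nonempty) (hnil : ∀ x ∈ s, IsNilpotent x) :
    ∃ n, ∃ x₀ ∈ s, ∃ ε > 0, ∀ y ∈ s, dist y x₀ < ε → y ^ n = 0 := by
  have := hs.completeSpace_coe
  have := hne.to_subtype
  obtain ⟨n, x₀, hx₀⟩ := nonempty_interior_of_iUnion_of_closed
    (f := fun n : ℕ => {x : s | (x : A) ^ n = 0})
    (fun n => isClosed_eq (continuous_subtype_val.pow n) continuous_const)
    (Set.iUnion_eq_univ_iff.2 fun x => hnil x x.2)
  obtain ⟨ε, hε, hball⟩ := Metric.isOpen_iff.1 isOpen_interior x₀ hx₀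
  exact ⟨n, x₀, x₀.2, ε, hε, fun y hy hyx =>
    interior_subset (s := {x : s | (x : A) ^ n = 0}) (hball (a := ⟨y, hy⟩) hyx)⟩

theorem Ideal.exists_forall_pow_eq_zero_of_isClosed {𝕜 A : Type*} [NontriviallyNormedField 𝕜]
    [NormedCommRing A] [NormedAlgebra 𝕜 A] [CompleteSpace A] {I : Ideal A}
    (hI : IsClosed (I : Set A)) (hnil : ∀ x ∈ I, IsNilpotent x) : ∃ n, ∀ y ∈ I, y ^ n = 0 := by
  obtain ⟨n, x₀, hx₀, ε, hε, hball⟩ := hI.exists_ball_subset_pow_eq_zero ⟨0, I.zero_mem⟩ hnil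
  refine ⟨n, fun y hy => ?_⟩
  have hδ : 0 < ε / (‖y‖ + 1) := by positivity
  have hline : ∀ t ∈ Metric.ball (0 : 𝕜) (ε / (‖y‖ + 1)), (x₀ + t • y) ^ n * 1 = 0 := by
    intro t ht
    rw [mul_one]
    refine hball _ (I.add_mem hx₀ (I.smul_of_tower_mem t hy)) ?_
    rw [mem_ball_zero_iff, lt_div_iff₀ (by positivity)] at ht
    rw [dist_eq_norm, add_sub_cancel_left, norm_smul]
    nlinarith [norm_nonneg t]
  simpa using choose_smul_mul_eq_zero_of_forall_add_smul_pow_mul_eq_zero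
    (infinite_of_mem_nhds 0 (Metric.ball_mem_nhds 0 hδ)) hline le_rfl

theorem stmt_14 {A : Type*} [NormedCommRing A] [NormedAlgebra ℂ A]
    [CompleteSpace A] (I : Ideal A) (hclosed : IsClosed (I : Set A))
    (hnil : ∀ x ∈ I, IsNilpotent x) :
    ∃ N : ℕ, 0 < N ∧ I ^ N = ⊥ := by
  obtain ⟨n, hn⟩ := Ideal.exists_forall_pow_eq_zero_of_isClosed (𝕜 := ℂ) hclosed hnil
  exact ⟨n + 1, n.succ_pos, I.pow_eq_bot_of_forall_pow_eq_zero ℂ fun a ha => by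
    rw [pow_succ, hn a ha, zero_mul]⟩
end
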